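/- arXiv:1703.05709 — 2 statements merged into one kernel-verified Lean document; each statement's English description precedes it below -/
import Mathlib

section
/- Under Assumptions A1 and A3, let v^β denote the optimal value of the perturbed ask-price problem (P^β) (constraints A_t(·) ≥ β_t) and let v* denote the optimal value of the ask-price problem (P) (i.e., β = 0). Then for all β = (β₁,…,β_T) in a neighborhood of 0, |v^β − v*| ≤ 2·β̄·‖S₀‖₁, where β̄ = Σ_{t=1}^T |β_t| and ‖S₀‖₁ = Σ_{i=1}^m S₀^{(i)}. -/
/-!
Hold `c t = ∑_{t < s ≤ T} |β s|` extra units of the numéraire at each time `t`. Since the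
numéraire is worth 1, this raises the `t`-th hedging position by exactly `c (t-1) - c t = |β t|`,
and since every `Z ∈ 𝒵_t` is a density, `A_t` is cash additive: `A_t(Y + d) = A_t(Y) + d`
(Hölder's inequality and A1 keep the infimum defining `A_t(Y)` finite). So the shift turns
strategies feasible for `(P^β)` into strategies feasible for `(P)` and conversely, each time at the
extra initial cost `c 0 = β̄`. Hence `|v^β - v*| ≤ β̄ ≤ 2 β̄ ‖S₀‖₁`, as `S₀` is nonnegative with
first coordinate 1.
-/

open MeasureTheory Finset
open scoped ENNReal NNReal

noncomputable section

variable {Ω : Type*} [m0 : MeasurableSpace Ω]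

/-- The acceptability functional `A(Y) = inf {E[Y·Z] : Z ∈ 𝒵}` associated with a
superdifferential `𝒵` (a set of densities). -/
def accFun (P : Measure Ω) (𝒵 : Set (Ω → ℝ)) (Y : Ω → ℝ) : ℝ :=
  sInf ((fun Z => ∫ ω, Y ω * Z ω ∂P) '' 𝒵)

/-- The position to be acceptable at stage `t` for the ask-price (superhedging) problem:
`(x_{t-1} - x_t)ᵀ S_t - C_t` for `1 ≤ t ≤ T-1` and `x_{T-1}ᵀ S_T - C_T` at `t = T`. -/
def askGain (T m : ℕ) (S : ℕ → Fin m → Ω → ℝ) (C : ℕ → Ω → ℝ)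
    (x : ℕ → Fin m → Ω → ℝ) (t : ℕ) (ω : Ω) : ℝ :=
  if t < T then (∑ i, (x (t - 1) i ω - x t i ω) * S t i ω) - C t ω
  else (∑ i, x (T - 1) i ω * S T i ω) - C T ω

/-- A trading strategy: `x_0` deterministic, `x_t ∈ L_∞^m(Ω, 𝔉_t)` adapted. -/
def IsStrategy (P : Measure Ω) (T m : ℕ) (F : ℕ → MeasurableSpace Ω)
    (x : ℕ → Fin m → Ω → ℝ) : Prop :=
  (∀ i, ∃ c : ℝ, ∀ ω, x 0 i ω = c) ∧
  (∀ t < T, ∀ i, StronglyMeasurable[F t] (x t i)) ∧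
  (∃ K : ℝ, ∀ t < T, ∀ i, ∀ᵐ ω ∂P, |x t i ω| ≤ K)

/-- Feasibility for the perturbed ask-price problem `(P^β)`:
`A_t(gain_t) ≥ β_t` for `t = 1, …, T`. -/
def AskFeasible (P : Measure Ω) (T m : ℕ) (F : ℕ → MeasurableSpace Ω)
    (S : ℕ → Fin m → Ω → ℝ) (C : ℕ → Ω → ℝ) (𝒵 : ℕ → Set (Ω → ℝ))
    (β : ℕ → ℝ) (x : ℕ → Fin m → Ω → ℝ) : Prop :=
  IsStrategy P T m F x ∧
    ∀ t, 1 ≤ t → t ≤ T → β t ≤ accFun P (𝒵 t) (askGain T m S C x t)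

/-- The initial capital `x₀ᵀS₀` of a strategy (written as an expectation; both `x₀` and
`S₀` are deterministic and `P` is a probability measure). -/
def initCost (P : Measure Ω) (m : ℕ) (S : ℕ → Fin m → Ω → ℝ)
    (x : ℕ → Fin m → Ω → ℝ) : ℝ :=
  ∫ ω, ∑ i, x 0 i ω * S 0 i ω ∂P

/-- The optimal value `v^β` of the perturbed ask-price problem `(P^β)`. -/
def askValue (P : Measure Ω) (T m : ℕ) (F : ℕ → MeasurableSpace Ω)
    (S : ℕ → Fin m → Ω → ℝ) (C : ℕ → Ω → ℝ) (𝒵 : ℕ → Set (Ω → ℝ))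
    (β : ℕ → ℝ) : ℝ :=
  sInf { r | ∃ x, AskFeasible P T m F S C 𝒵 β x ∧ r = initCost P m S x }


theorem bddBelow_of_forall_add_mem {A B : Set ℝ} {d : ℝ} (hB : BddBelow B)
    (hAB : ∀ a ∈ A, a + d ∈ B) : BddBelow A :=
  let ⟨l, hl⟩ := hB
  ⟨l - d, fun a ha => by linarith [hl (hAB a ha)]⟩

theorem sInf_le_sInf_add_of_forall_add_mem {A B : Set ℝ} {d : ℝ} (hA : BddBelow A)
    (hB : B.Nonempty) (hBA : ∀ b ∈ B, b + d ∈ A) : sInf A ≤ sInf B + d := by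
  rw [← sub_le_iff_le_add]
  exact le_csInf hB fun b hb => sub_le_iff_le_add.2 (csInf_le hA (hBA b hb))

theorem abs_sInf_sub_sInf_le_of_forall_add_mem {A B : Set ℝ} {d : ℝ} (hd : 0 ≤ d)
    (hAB : ∀ a ∈ A, a + d ∈ B) (hBA : ∀ b ∈ B, b + d ∈ A) : |sInf A - sInf B| ≤ d := by
  rcases A.eq_empty_or_nonempty with rfl | hAne
  · obtain rfl : B = ∅ := Set.eq_empty_of_forall_notMem fun b hb => hBA b hb
    simpa using hd
  have hBne : B.Nonempty := let ⟨a, ha⟩ := hAne; ⟨a + d, hAB a ha⟩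
  by_cases hA : BddBelow A
  · have hB := bddBelow_of_forall_add_mem hA hBA
    rw [abs_sub_le_iff]
    constructor <;> linarith [sInf_le_sInf_add_of_forall_add_mem hA hBne hBA,
      sInf_le_sInf_add_of_forall_add_mem hB hAne hAB]
  · have hB : ¬BddBelow B := fun hB => hA (bddBelow_of_forall_add_mem hB hAB)
    simpa [Real.sInf_of_not_bddBelow hA, Real.sInf_of_not_bddBelow hB] using hd

theorem enorm_integral_mul_le {P : Measure Ω} {p q : ℝ≥0∞} [p.HolderConjugate q] {f g : Ω → ℝ}
    (hf : AEStronglyMeasurable f P) (hg : AEStronglyMeasurable g P) :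
    ‖∫ ω, f ω * g ω ∂P‖ₑ ≤ eLpNorm f p P * eLpNorm g q P :=
  calc ‖∫ ω, f ω * g ω ∂P‖ₑ ≤ ∫⁻ ω, ‖f ω * g ω‖ₑ ∂P := enorm_integral_le_lintegral_enorm _
    _ = eLpNorm (f • g) 1 P := eLpNorm_one_eq_lintegral_enorm.symm
    _ ≤ eLpNorm f p P * eLpNorm g q P := eLpNorm_smul_le_mul_eLpNorm hg hf

theorem accFun_congr_ae {P : Measure Ω} (𝒵 : Set (Ω → ℝ)) {Y Y' : Ω → ℝ} (h : Y =ᵐ[P] Y') :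
    accFun P 𝒵 Y = accFun P 𝒵 Y' := by
  unfold accFun
  congr 1
  exact Set.image_congr fun Z _ => integral_congr_ae (h.mul (Filter.EventuallyEq.refl _ Z))

theorem accFun_add_const {P : Measure Ω} {𝒵 : Set (Ω → ℝ)} {Y : Ω → ℝ} (hne : 𝒵.Nonempty)
    (hdens : ∀ Z ∈ 𝒵, ∫ ω, Z ω ∂P = 1) (hint : ∀ Z ∈ 𝒵, Integrable (fun ω => Y ω * Z ω) P)
    (hbdd : BddBelow ((fun Z => ∫ ω, Y ω * Z ω ∂P) '' 𝒵)) (d : ℝ) :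
    accFun P 𝒵 (fun ω => Y ω + d) = accFun P 𝒵 Y + d := by
  have hshift : ∀ Z ∈ 𝒵, ∫ ω, (Y ω + d) * Z ω ∂P = ∫ ω, Y ω * Z ω ∂P + d := by
    intro Z hZ
    simp_rw [add_mul]
    rw [integral_add (hint Z hZ) ((integrable_of_integral_eq_one (hdens Z hZ)).const_mul d),
      integral_const_mul, hdens Z hZ, mul_one]
  have := (OrderIso.addRight d).map_csInf' (hne.image _) hbdd
  rw [Set.image_image] at this
  unfold accFun
  rw [Set.image_congr hshift]
  exact this.symm

def CashAdditive (P : Measure Ω) (p : ℝ≥0∞) (𝒵 : Set (Ω → ℝ)) : Prop :=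
  ∀ Y, MemLp Y p P → ∀ d : ℝ, accFun P 𝒵 (fun ω => Y ω + d) = accFun P 𝒵 Y + d

theorem cashAdditive_of_eLpNorm_le {P : Measure Ω} {p q : ℝ≥0∞} [p.HolderConjugate q]
    {𝒵 : Set (Ω → ℝ)} {K : ℝ≥0∞} (hK : K ≠ ∞) (hne : 𝒵.Nonempty)
    (hmeas : ∀ Z ∈ 𝒵, AEStronglyMeasurable Z P) (hnorm : ∀ Z ∈ 𝒵, eLpNorm Z q P ≤ K)
    (hdens : ∀ Z ∈ 𝒵, ∫ ω, Z ω ∂P = 1) : CashAdditive P p 𝒵 := by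
  intro Y hY d
  have hZ : ∀ Z ∈ 𝒵, MemLp Z q P := fun Z hZ => ⟨hmeas Z hZ, (hnorm Z hZ).trans_lt hK.lt_top⟩
  refine accFun_add_const hne hdens (fun Z hZ' => hY.integrable_mul (hZ Z hZ'))
    ⟨-(eLpNorm Y p P * K).toReal, ?_⟩ d
  rintro _ ⟨Z, hZ', rfl⟩
  have h := (enorm_integral_mul_le (p := p) (q := q) hY.1 (hmeas Z hZ')).trans
    (mul_le_mul_right (hnorm Z hZ') _)
  have := ENNReal.toReal_mono (ENNReal.mul_ne_top hY.eLpNorm_ne_top hK) h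
  rw [toReal_enorm, Real.norm_eq_abs] at this
  exact neg_le_of_abs_le this

section Strategies

variable {P : Measure Ω} {T m : ℕ} {F : ℕ → MeasurableSpace Ω} {S : ℕ → Fin m → Ω → ℝ}
  {C : ℕ → Ω → ℝ} {x : ℕ → Fin m → Ω → ℝ}

theorem IsStrategy.memLp_askGain {p : ℝ≥0∞} (hx : IsStrategy P T m F x) (hFle : ∀ t, F t ≤ m0)
    (hSmem : ∀ t ≤ T, ∀ i, MemLp (S t i) p P) (hCmem : ∀ t, 1 ≤ t → t ≤ T → MemLp (C t) p P)
    {t : ℕ} (ht1 : 1 ≤ t) (htT : t ≤ T) : MemLp (askGain T m S C x t) p P := by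
  obtain ⟨-, hxmeas, K, hxK⟩ := hx
  have hprod : ∀ a < T, ∀ i, MemLp (fun ω => x a i ω * S t i ω) p P := fun a ha i =>
    (hSmem t htT i).of_le_mul (c := K)
      (((hxmeas a ha i).mono (hFle a)).aestronglyMeasurable.mul (hSmem t htT i).1)
      (by filter_upwards [hxK a ha i] with ω hω
          rw [norm_mul, Real.norm_eq_abs, Real.norm_eq_abs]
          exact mul_le_mul_of_nonneg_right hω (abs_nonneg _))
  unfold askGain
  split_ifs with ht
  · simp_rw [sub_mul, sum_sub_distrib]
    exact ((memLp_finsetSum _ fun i _ => hprod (t - 1) (by omega) i).sub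
      (memLp_finsetSum _ fun i _ => hprod t ht i)).sub (hCmem t ht1 htT)
  · obtain rfl : t = T := by omega
    exact (memLp_finsetSum _ fun i _ => hprod (t - 1) (by omega) i).sub (hCmem t ht1 htT)

def addCash (i₀ : Fin m) (c : ℕ → ℝ) (x : ℕ → Fin m → Ω → ℝ) : ℕ → Fin m → Ω → ℝ :=
  fun t i ω => x t i ω + if i = i₀ then c t else 0

theorem sum_add_ite_mul (a s : Fin m → ℝ) (i₀ : Fin m) (c : ℝ) :
    ∑ i, (a i + if i = i₀ then c else 0) * s i = ∑ i, a i * s i + c * s i₀ := by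
  simp [add_mul, sum_add_distrib]

theorem askGain_addCash_ae {i₀ : Fin m} {c : ℕ → ℝ} (hcT : c T = 0) {t : ℕ} (htT : t ≤ T)
    (hnum : ∀ᵐ ω ∂P, S t i₀ ω = 1) :
    askGain T m S C (addCash i₀ c x) t =ᵐ[P]
      fun ω => askGain T m S C x t ω + (c (t - 1) - c t) := by
  filter_upwards [hnum] with ω hω
  unfold askGain addCash
  split_ifs with ht
  · simp only [add_sub_add_comm, ite_sub_ite, sub_self, sum_add_ite_mul, hω]
    ring
  · obtain rfl : t = T := by omega
    rw [sum_add_ite_mul, hcT, hω]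
    ring

theorem IsStrategy.addCash (hx : IsStrategy P T m F x) (i₀ : Fin m) (c : ℕ → ℝ) :
    IsStrategy P T m F (addCash i₀ c x) := by
  obtain ⟨hx0, hxmeas, K, hxK⟩ := hx
  refine ⟨fun i => ?_, fun t ht i => (hxmeas t ht i).add stronglyMeasurable_const,
    K + ∑ s ∈ range T, |c s|, fun t ht i => ?_⟩
  · obtain ⟨a, ha⟩ := hx0 i
    exact ⟨a + if i = i₀ then c 0 else 0, fun ω => by simp only [_root_.addCash, ha]⟩
  · have hc : |c t| ≤ ∑ s ∈ range T, |c s| :=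
      single_le_sum (fun s _ => abs_nonneg (c s)) (mem_range.2 ht)
    filter_upwards [hxK t ht i] with ω hω
    calc |_root_.addCash i₀ c x t i ω| ≤ |x t i ω| + |if i = i₀ then c t else 0| := abs_add_le _ _
      _ ≤ K + ∑ s ∈ range T, |c s| := by
        gcongr
        split_ifs
        · exact hc
        · simpa using (abs_nonneg _).trans hc

theorem initCost_addCash [IsProbabilityMeasure P] {S₀ : Fin m → ℝ} (hS0 : ∀ i ω, S 0 i ω = S₀ i)
    (hx : IsStrategy P T m F x) (i₀ : Fin m) (c : ℕ → ℝ) :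
    initCost P m S (addCash i₀ c x) = initCost P m S x + c 0 * S₀ i₀ := by
  choose a ha using hx.1
  simp [initCost, addCash, ha, hS0, sum_add_ite_mul]

end Strategies

section Feasibility

variable {P : Measure Ω} {T m : ℕ} {F : ℕ → MeasurableSpace Ω} {S : ℕ → Fin m → Ω → ℝ}
  {C : ℕ → Ω → ℝ} {𝒵 : ℕ → Set (Ω → ℝ)} {x : ℕ → Fin m → Ω → ℝ}

theorem AskFeasible.mono {γ γ' : ℕ → ℝ} (hx : AskFeasible P T m F S C 𝒵 γ x)
    (hγ : ∀ t, 1 ≤ t → t ≤ T → γ' t ≤ γ t) : AskFeasible P T m F S C 𝒵 γ' x :=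
  ⟨hx.1, fun t ht1 htT => (hγ t ht1 htT).trans (hx.2 t ht1 htT)⟩

theorem AskFeasible.addCash {p : ℝ≥0∞} {γ : ℕ → ℝ} (hx : AskFeasible P T m F S C 𝒵 γ x)
    (hFle : ∀ t, F t ≤ m0) (hSmem : ∀ t ≤ T, ∀ i, MemLp (S t i) p P)
    (hCmem : ∀ t, 1 ≤ t → t ≤ T → MemLp (C t) p P) {i₀ : Fin m}
    (hnum : ∀ t ≤ T, ∀ᵐ ω ∂P, S t i₀ ω = 1)
    (hcash : ∀ t, 1 ≤ t → t ≤ T → CashAdditive P p (𝒵 t))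
    {c : ℕ → ℝ} (hcT : c T = 0) :
    AskFeasible P T m F S C 𝒵 (fun t => γ t + (c (t - 1) - c t)) (addCash i₀ c x) := by
  refine ⟨hx.1.addCash i₀ c, fun t ht1 htT => ?_⟩
  rw [accFun_congr_ae _ (askGain_addCash_ae hcT htT (hnum t htT)),
    hcash t ht1 htT _ (hx.1.memLp_askGain hFle hSmem hCmem ht1 htT)]
  exact add_le_add_left (hx.2 t ht1 htT) _

theorem sum_Ioc_pred_sub_sum_Ioc (b : ℕ → ℝ) {t T : ℕ} (ht1 : 1 ≤ t) (htT : t ≤ T) :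
    ∑ s ∈ Ioc (t - 1) T, b s - ∑ s ∈ Ioc t T, b s = b t := by
  obtain ⟨t, rfl⟩ : ∃ s, t = s + 1 := ⟨t - 1, by omega⟩
  rw [Nat.add_sub_cancel, ← sum_Ioc_consecutive b t.le_succ htT, Nat.Ioc_succ_singleton,
    sum_singleton, add_sub_cancel_right]

theorem abs_askValue_sub_askValue_le [IsProbabilityMeasure P] {p : ℝ≥0∞} (hFle : ∀ t, F t ≤ m0)
    {S₀ : Fin m → ℝ} (hS0 : ∀ i ω, S 0 i ω = S₀ i) (hSmem : ∀ t ≤ T, ∀ i, MemLp (S t i) p P)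
    {i₀ : Fin m} (hnum : ∀ t ≤ T, ∀ᵐ ω ∂P, S t i₀ ω = 1)
    (hCmem : ∀ t, 1 ≤ t → t ≤ T → MemLp (C t) p P)
    (hcash : ∀ t, 1 ≤ t → t ≤ T → CashAdditive P p (𝒵 t))
    (γ γ' : ℕ → ℝ) :
    |askValue P T m F S C 𝒵 γ - askValue P T m F S C 𝒵 γ'| ≤ ∑ t ∈ Icc 1 T, |γ t - γ' t| := by
  set c : ℕ → ℝ := fun t => ∑ s ∈ Ioc t T, |γ s - γ' s|
  have hcT : c T = 0 := by simp [c]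
  have hc0 : c 0 = ∑ t ∈ Icc 1 T, |γ t - γ' t| := by simp [c, ← Finset.Icc_add_one_left_eq_Ioc]
  have hS₀ : S₀ i₀ = 1 := by
    obtain ⟨ω, hω⟩ := (hnum 0 T.zero_le).exists
    rwa [hS0] at hω
  have hmove : ∀ δ δ' : ℕ → ℝ, (∀ t, 1 ≤ t → t ≤ T → δ' t ≤ δ t + |γ t - γ' t|) →
      ∀ r ∈ {r | ∃ x, AskFeasible P T m F S C 𝒵 δ x ∧ r = initCost P m S x},
        r + c 0 ∈ {r | ∃ x, AskFeasible P T m F S C 𝒵 δ' x ∧ r = initCost P m S x} := by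
    rintro δ δ' hδ _ ⟨x, hx, rfl⟩
    refine ⟨addCash i₀ c x,
      (hx.addCash hFle hSmem hCmem hnum hcash hcT).mono fun t ht1 htT => ?_,
      by rw [initCost_addCash hS0 hx.1, hS₀, mul_one]⟩
    simpa only [c, sum_Ioc_pred_sub_sum_Ioc _ ht1 htT] using hδ t ht1 htT
  rw [← hc0]
  refine abs_sInf_sub_sInf_le_of_forall_add_mem (sum_nonneg fun _ _ => abs_nonneg _)
    (hmove γ γ' fun t _ _ => ?_) (hmove γ' γ fun t _ _ => ?_)
  · linarith [neg_abs_le (γ t - γ' t)]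
  · linarith [le_abs_self (γ t - γ' t)]

end Feasibility

theorem perturbed_askValue_close_general
    (P : Measure Ω) [IsProbabilityMeasure P]
    (T m : ℕ) (hm : 0 < m)
    (p q : ℝ≥0∞) (hpq : 1 / p + 1 / q = 1)
    -- filtration
    (F : ℕ → MeasurableSpace Ω) (hFle : ∀ t, F t ≤ m0)
    -- asset price process
    (S : ℕ → Fin m → Ω → ℝ) (S₀ : Fin m → ℝ)
    (hS0 : ∀ i ω, S 0 i ω = S₀ i)
    (hSmem : ∀ t ≤ T, ∀ i, MemLp (S t i) p P)
    (hSnonneg : ∀ t ≤ T, ∀ i, ∀ᵐ ω ∂P, 0 ≤ S t i ω)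
    -- numéraire: the first asset is identically 1
    (hnum : ∀ t ≤ T, ∀ᵐ ω ∂P, S t ⟨0, hm⟩ ω = 1)
    -- contingent claim
    (C : ℕ → Ω → ℝ)
    (hCmem : ∀ t, 1 ≤ t → t ≤ T → MemLp (C t) p P)
    -- superdifferentials of the acceptability functionals
    (𝒵 : ℕ → Set (Ω → ℝ))
    (h𝒵ne : ∀ t, 1 ≤ t → t ≤ T → (𝒵 t).Nonempty)
    (h𝒵meas : ∀ t, 1 ≤ t → t ≤ T → ∀ Z ∈ 𝒵 t, StronglyMeasurable[F t] Z)
    (h𝒵dens : ∀ t, 1 ≤ t → t ≤ T → ∀ Z ∈ 𝒵 t, ∫ ω, Z ω ∂P = 1)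
    -- Assumption A1
    (K₁ : ℝ)
    (hA1 : ∀ t, 1 ≤ t → t ≤ T → ∀ Z ∈ 𝒵 t, eLpNorm Z q P ≤ ENNReal.ofReal K₁)
    (δ : ℝ) :
    ∀ β : ℕ → ℝ, (∀ t, 1 ≤ t → t ≤ T → |β t| ≤ δ) →
      |askValue P T m F S C 𝒵 β - askValue P T m F S C 𝒵 (fun _ => 0)| ≤
        2 * (∑ t ∈ Icc 1 T, |β t|) * ∑ i, S₀ i := by
  intro β _
  have : p.HolderConjugate q := ENNReal.holderConjugate_iff.2 (by simpa only [one_div] using hpq)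
  have hcash : ∀ t, 1 ≤ t → t ≤ T → CashAdditive P p (𝒵 t) := fun t ht1 htT =>
    cashAdditive_of_eLpNorm_le ENNReal.ofReal_ne_top (h𝒵ne t ht1 htT)
      (fun Z hZ => ((h𝒵meas t ht1 htT Z hZ).mono (hFle t)).aestronglyMeasurable)
      (hA1 t ht1 htT) (h𝒵dens t ht1 htT)
  have hS₀ : 1 ≤ ∑ i, S₀ i := by
    obtain ⟨ω, hω1, hω⟩ := ((hnum 0 T.zero_le).and (ae_all_iff.2 (hSnonneg 0 T.zero_le))).exists
    simp only [hS0] at hω1 hω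
    exact hω1 ▸ single_le_sum (fun i _ => hω i) (mem_univ _)
  have hβ : 0 ≤ ∑ t ∈ Icc 1 T, |β t| := sum_nonneg fun _ _ => abs_nonneg _
  calc |askValue P T m F S C 𝒵 β - askValue P T m F S C 𝒵 (fun _ => 0)|
      ≤ ∑ t ∈ Icc 1 T, |β t - 0| :=
        abs_askValue_sub_askValue_le hFle hS0 hSmem hnum hCmem hcash β _
    _ = ∑ t ∈ Icc 1 T, |β t| := by simp only [sub_zero]
    _ ≤ 2 * (∑ t ∈ Icc 1 T, |β t|) * ∑ i, S₀ i := by nlinarith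

/-- Lemma 2.1 of the paper. Under Assumptions A1 and A3,
`|v^β − v*| ≤ 2 β̄ ‖S₀‖₁` for `β` in a neighborhood of `0`. -/
theorem perturbed_askValue_close
    (P : Measure Ω) [IsProbabilityMeasure P]
    (T m : ℕ) (hT : 1 ≤ T) (hm : 0 < m)
    (p q : ℝ≥0∞) (hp1 : 1 < p) (hptop : p < ⊤) (hpq : 1 / p + 1 / q = 1)
    -- filtration
    (F : ℕ → MeasurableSpace Ω) (hFmono : Monotone F) (hFle : ∀ t, F t ≤ m0)
    (hF0 : F 0 = ⊥)
    -- asset price process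
    (S : ℕ → Fin m → Ω → ℝ) (S₀ : Fin m → ℝ)
    (hS0 : ∀ i ω, S 0 i ω = S₀ i)
    (hSmeas : ∀ t ≤ T, ∀ i, StronglyMeasurable[F t] (S t i))
    (hSmem : ∀ t ≤ T, ∀ i, MemLp (S t i) p P)
    (hSnonneg : ∀ t ≤ T, ∀ i, ∀ᵐ ω ∂P, 0 ≤ S t i ω)
    -- numéraire: the first asset is identically 1
    (hnum : ∀ t ≤ T, ∀ᵐ ω ∂P, S t ⟨0, hm⟩ ω = 1)
    -- contingent claim
    (C : ℕ → Ω → ℝ)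
    (hCmeas : ∀ t, 1 ≤ t → t ≤ T → StronglyMeasurable[F t] (C t))
    (hCmem : ∀ t, 1 ≤ t → t ≤ T → MemLp (C t) p P)
    -- superdifferentials of the acceptability functionals
    (𝒵 : ℕ → Set (Ω → ℝ))
    (h𝒵ne : ∀ t, 1 ≤ t → t ≤ T → (𝒵 t).Nonempty)
    (h𝒵conv : ∀ t, 1 ≤ t → t ≤ T → Convex ℝ (𝒵 t))
    (h𝒵meas : ∀ t, 1 ≤ t → t ≤ T → ∀ Z ∈ 𝒵 t, StronglyMeasurable[F t] Z)
    (h𝒵nonneg : ∀ t, 1 ≤ t → t ≤ T → ∀ Z ∈ 𝒵 t, 0 ≤ᵐ[P] Z)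
    (h𝒵dens : ∀ t, 1 ≤ t → t ≤ T → ∀ Z ∈ 𝒵 t, ∫ ω, Z ω ∂P = 1)
    -- Assumption A1
    (K₁ : ℝ)
    (hA1 : ∀ t, 1 ≤ t → t ≤ T → ∀ Z ∈ 𝒵 t, eLpNorm Z q P ≤ ENNReal.ofReal K₁)
    -- Assumption A3: attainment and uniform boundedness near β = 0
    (δ : ℝ) (hδ : 0 < δ) (K₂ : ℝ)
    (hA3attain : ∀ β : ℕ → ℝ, (∀ t, 1 ≤ t → t ≤ T → |β t| ≤ δ) →
      ∃ x, AskFeasible P T m F S C 𝒵 β x ∧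
        initCost P m S x = askValue P T m F S C 𝒵 β)
    (hA3bound : ∀ β : ℕ → ℝ, (∀ t, 1 ≤ t → t ≤ T → |β t| ≤ δ) →
      ∀ x, AskFeasible P T m F S C 𝒵 β x →
        initCost P m S x = askValue P T m F S C 𝒵 β →
        ∀ t < T, ∀ i, ∀ᵐ ω ∂P, |x t i ω| ≤ K₂) :
    ∀ β : ℕ → ℝ, (∀ t, 1 ≤ t → t ≤ T → |β t| ≤ δ) →
      |askValue P T m F S C 𝒵 β - askValue P T m F S C 𝒵 (fun _ => 0)| ≤
        2 * (∑ t ∈ Icc 1 T, |β t|) * ∑ i, S₀ i :=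
  perturbed_askValue_close_general P T m hm p q hpq F hFle S S₀ hS0 hSmem hSnonneg hnum C hCmem 𝒵
    h𝒵ne h𝒵meas h𝒵dens K₁ hA1 δ
end
end

section
/- Let D̄₁ ⊂ ℝ^{d₁} and D̄₂ ⊂ ℝ^{d₂} be compact sets, write D̄ = D̄₁×D̄₂, let Δ be the diameter of D̄ and assume λ(D̄₁) ≤ Δ^{d₁} (λ denoting Lebesgue measure). Let f and g be bivariate probability densities supported on D̄ with 0 < c̲ ≤ f(x,y), g(x,y) ≤ c̄ < ∞ on D̄, and define the conditional densities f(x|y) := f(x,y)/∫_{D̄₁} f(x′,y)dx′ and analogously g(x|y). If ‖f − g‖_{D̄} := sup_{(x,y)∈D̄}|f(x,y)−g(x,y)| ≤ c̲·λ(D̄₁)/(2·Δ^{d₁}), then for all x ∈ D̄₁ and y ∈ D̄₂: |f(x|y) − g(x|y)| ≤ κ₁·‖f − g‖_{D̄}, where κ₁ = 1/(c̲·λ(D̄₁)) + 2·c̄·Δ^{d₁}/(c̲·λ(D̄₁))². -/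
/-!
Write `F(y) = ∫_{D̄₁} f(x', y) dx'` and `G(y)` likewise. Both normalizers are at least
`c̲ λ(D̄₁)`, and `|F(y) - G(y)| ≤ λ(D̄₁) ‖f - g‖`. Splitting
`f/F - g/G = (f - g)/F + g (G - F)/(F G)` bounds the difference of the conditional densities
by `‖f - g‖/(c̲ λ(D̄₁)) + c̄ λ(D̄₁) ‖f - g‖/(c̲ λ(D̄₁))²`, and `λ(D̄₁) ≤ Δ^{d₁}` finishes.
-/

open MeasureTheory
open scoped ENNReal

lemma abs_div_sub_div_le_of_le {a b F G L : ℝ} (hL : 0 < L) (hF : L ≤ F) (hG : L ≤ G) :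
    |a / F - b / G| ≤ |a - b| / L + |b| * |F - G| / L ^ 2 := by
  have hF0 : 0 < F := hL.trans_le hF
  have hG0 : 0 < G := hL.trans_le hG
  have hsplit : a / F - b / G = (a - b) / F + b * (G - F) / (F * G) := by
    field_simp
    ring
  calc |a / F - b / G| ≤ |(a - b) / F| + |b * (G - F) / (F * G)| := hsplit ▸ abs_add_le _ _
    _ = |a - b| / F + |b| * |F - G| / (F * G) := by
        rw [abs_div, abs_div, abs_mul, abs_of_pos hF0, abs_of_pos (mul_pos hF0 hG0),
          abs_sub_comm G]
    _ ≤ |a - b| / L + |b| * |F - G| / (L * L) := by gcongr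
    _ = |a - b| / L + |b| * |F - G| / L ^ 2 := by rw [sq]

section NormalizedDensity

variable {α : Type*} [MeasurableSpace α] {μ : Measure α} {s : Set α} {u v : α → ℝ}
  {clo chi M : ℝ}

lemma integrableOn_of_forall_mem_bounds (hs : MeasurableSet s) (hμs : μ s ≠ ∞)
    (hu : AEStronglyMeasurable u (μ.restrict s)) (hclo : 0 < clo)
    (hbounds : ∀ x ∈ s, clo ≤ u x ∧ u x ≤ chi) : IntegrableOn u s μ :=
  .of_bound hμs.lt_top hu chi <| ae_restrict_of_forall_mem hs fun x hx => by
    rw [Real.norm_eq_abs, abs_le]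
    constructor <;> linarith [hbounds x hx]

theorem abs_div_setIntegral_sub_div_setIntegral_le (hs : MeasurableSet s) (hμs : μ s ≠ ∞)
    (hu : AEStronglyMeasurable u (μ.restrict s)) (hv : AEStronglyMeasurable v (μ.restrict s))
    (hclo : 0 < clo) (hubounds : ∀ x ∈ s, clo ≤ u x ∧ u x ≤ chi)
    (hvbounds : ∀ x ∈ s, clo ≤ v x ∧ v x ≤ chi) (hM : ∀ x ∈ s, |u x - v x| ≤ M)
    {x : α} (hx : x ∈ s) :
    |u x / ∫ x in s, u x ∂μ - v x / ∫ x in s, v x ∂μ| ≤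
      (1 / (clo * μ.real s) + chi * μ.real s / (clo * μ.real s) ^ 2) * M := by
  rcases eq_or_ne (μ s) 0 with hμ0 | hμ0
  -- on a null set both normalizers and `μ.real s` vanish, and `_ / 0 = 0` makes both sides `0`
  · simp [Measure.restrict_eq_zero.2 hμ0, measureReal_def, hμ0]
  have hL : 0 < clo * μ.real s := mul_pos hclo (ENNReal.toReal_pos hμ0 hμs)
  have hui := integrableOn_of_forall_mem_bounds hs hμs hu hclo hubounds
  have hvi := integrableOn_of_forall_mem_bounds hs hμs hv hclo hvbounds
  have hF := setIntegral_ge_of_const_le_real hs hμs (fun x hx => (hubounds x hx).1) hui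
  have hG := setIntegral_ge_of_const_le_real hs hμs (fun x hx => (hvbounds x hx).1) hvi
  have hFG : |(∫ x in s, u x ∂μ) - ∫ x in s, v x ∂μ| ≤ M * μ.real s := by
    rw [← integral_sub hui hvi]
    exact norm_setIntegral_le_of_norm_le_const hμs.lt_top fun x hx =>
      (Real.norm_eq_abs _).trans_le (hM x hx)
  have hvx : |v x| ≤ chi := by
    rw [abs_of_pos (hclo.trans_le (hvbounds x hx).1)]
    exact (hvbounds x hx).2
  have hchi : 0 ≤ chi := (abs_nonneg _).trans hvx
  calc _ ≤ |u x - v x| / (clo * μ.real s) +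
          |v x| * |(∫ x in s, u x ∂μ) - ∫ x in s, v x ∂μ| / (clo * μ.real s) ^ 2 :=
        abs_div_sub_div_le_of_le hL hF hG
    _ ≤ M / (clo * μ.real s) + chi * (M * μ.real s) / (clo * μ.real s) ^ 2 := by
        gcongr
        exact hM x hx
    _ = _ := by ring

end NormalizedDensity

theorem conditional_density_close_general
    {d₁ d₂ : ℕ} (D₁ : Set (Fin d₁ → ℝ)) (D₂ : Set (Fin d₂ → ℝ))
    (hD₁cpt : IsCompact D₁)
    -- `Δ` = diameter of `D̄ = D̄₁ × D̄₂`, and the volume comparison `λ(D̄₁) ≤ Δ^{d₁}`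
    (hvol : (volume D₁).toReal ≤ Metric.diam (D₁ ×ˢ D₂) ^ d₁)
    (f g : (Fin d₁ → ℝ) × (Fin d₂ → ℝ) → ℝ)
    (hfmeas : Measurable f) (hgmeas : Measurable g)
    (clo chi : ℝ) (hclo : 0 < clo)
    (hfbounds : ∀ z ∈ D₁ ×ˢ D₂, clo ≤ f z ∧ f z ≤ chi)
    (hgbounds : ∀ z ∈ D₁ ×ˢ D₂, clo ≤ g z ∧ g z ≤ chi)
    -- `M` is a bound for `‖f − g‖_{D̄}`, small enough
    (M : ℝ) (hM : ∀ z ∈ D₁ ×ˢ D₂, |f z - g z| ≤ M) :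
    ∀ x ∈ D₁, ∀ y ∈ D₂,
      |f (x, y) / (∫ x' in D₁, f (x', y)) - g (x, y) / (∫ x' in D₁, g (x', y))| ≤
        (1 / (clo * (volume D₁).toReal) +
          2 * chi * Metric.diam (D₁ ×ˢ D₂) ^ d₁ / (clo * (volume D₁).toReal) ^ 2) * M := by
  intro x hx y hy
  have hsec : ∀ x' ∈ D₁, (x', y) ∈ D₁ ×ˢ D₂ := fun x' hx' => ⟨hx', hy⟩
  have hchi : 0 ≤ chi :=
    hclo.le.trans ((hfbounds _ (hsec x hx)).1.trans (hfbounds _ (hsec x hx)).2)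
  have hM0 : 0 ≤ M := (abs_nonneg _).trans (hM _ (hsec x hx))
  have hvol' : chi * (volume D₁).toReal ≤ 2 * chi * Metric.diam (D₁ ×ˢ D₂) ^ d₁ := by
    nlinarith [(volume D₁).toReal_nonneg]
  calc _ ≤ (1 / (clo * volume.real D₁) +
          chi * volume.real D₁ / (clo * volume.real D₁) ^ 2) * M :=
        abs_div_setIntegral_sub_div_setIntegral_le hD₁cpt.measurableSet
          hD₁cpt.measure_lt_top.ne (hfmeas.comp measurable_prodMk_right).aestronglyMeasurable
          (hgmeas.comp measurable_prodMk_right).aestronglyMeasurable hclo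
          (fun x' hx' => hfbounds _ (hsec x' hx')) (fun x' hx' => hgbounds _ (hsec x' hx'))
          (fun x' hx' => hM _ (hsec x' hx')) hx
    _ ≤ _ := by
        rw [measureReal_def]
        gcongr

/-- Proposition 3.5 of the paper. If two bivariate densities, bounded
between `clo > 0` and `chi < ∞` on their common compact support `D̄ = D̄₁ × D̄₂`, are
uniformly close, then their conditional densities are close as well:
`|f(x|y) − g(x|y)| ≤ κ₁ ‖f − g‖_{D̄}` with
`κ₁ = 1/(clo λ(D̄₁)) + 2 chi Δ^{d₁}/(clo λ(D̄₁))²`. -/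
theorem conditional_density_close
    {d₁ d₂ : ℕ} (D₁ : Set (Fin d₁ → ℝ)) (D₂ : Set (Fin d₂ → ℝ))
    (hD₁cpt : IsCompact D₁) (hD₂cpt : IsCompact D₂)
    -- `Δ` = diameter of `D̄ = D̄₁ × D̄₂`, and the volume comparison `λ(D̄₁) ≤ Δ^{d₁}`
    (hvol : (volume D₁).toReal ≤ Metric.diam (D₁ ×ˢ D₂) ^ d₁)
    (f g : (Fin d₁ → ℝ) × (Fin d₂ → ℝ) → ℝ)
    (hfmeas : Measurable f) (hgmeas : Measurable g)
    (hf0 : ∀ z, 0 ≤ f z) (hg0 : ∀ z, 0 ≤ g z)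
    (hfsupp : ∀ z ∉ D₁ ×ˢ D₂, f z = 0) (hgsupp : ∀ z ∉ D₁ ×ˢ D₂, g z = 0)
    (hfint : ∫ z, f z = 1) (hgint : ∫ z, g z = 1)
    (clo chi : ℝ) (hclo : 0 < clo)
    (hfbounds : ∀ z ∈ D₁ ×ˢ D₂, clo ≤ f z ∧ f z ≤ chi)
    (hgbounds : ∀ z ∈ D₁ ×ˢ D₂, clo ≤ g z ∧ g z ≤ chi)
    -- `M` is a bound for `‖f − g‖_{D̄}`, small enough
    (M : ℝ) (hM : ∀ z ∈ D₁ ×ˢ D₂, |f z - g z| ≤ M)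
    (hMsmall : M ≤ clo * (volume D₁).toReal / (2 * Metric.diam (D₁ ×ˢ D₂) ^ d₁)) :
    ∀ x ∈ D₁, ∀ y ∈ D₂,
      |f (x, y) / (∫ x' in D₁, f (x', y)) - g (x, y) / (∫ x' in D₁, g (x', y))| ≤
        (1 / (clo * (volume D₁).toReal) +
          2 * chi * Metric.diam (D₁ ×ˢ D₂) ^ d₁ / (clo * (volume D₁).toReal) ^ 2) * M :=
  conditional_density_close_general D₁ D₂ hD₁cpt hvol f g hfmeas hgmeas clo chi hclo hfbounds
    hgbounds M hM
end
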